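/- For 0 < α < π/4, set θ = π/4 − α, and consider the ILS problem with A the 2×1 matrix (cos θ, sin θ)ᵀ, b = (1, 1)ᵀ, and J = diag(1, −1). Then ‖M₁‖₂ = ‖M₂‖₂ = 2^{-1/2}·csc(2α)·sec(α), so that ℬ = (‖A‖_F/‖x‖₂)·(‖M₁‖₂ + ‖M₂‖₂) = 2 csc(2α), and with χ = (‖A‖_F/‖x‖₂)·‖M₁ − M₂‖₂ = sec(α) the ratio satisfies ℬ/χ = 1/sin(α); in particular ℬ/χ tends to +∞ as α → 0⁺, so ℬ overestimates χ by an arbitrarily large factor. -/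

import Mathlib

open Matrix

/-- Euclidean (ℓ²) norm of a vector. -/
noncomputable def eNorm {p : Type*} [Fintype p] (v : p → ℝ) : ℝ :=
  Real.sqrt (∑ i, (v i) ^ 2)

/-- Frobenius norm of a matrix. -/
noncomputable def frobNorm {p q : Type*} [Fintype p] [Fintype q]
    (M : Matrix p q ℝ) : ℝ :=
  Real.sqrt (∑ i, ∑ j, (M i j) ^ 2)

/-- Spectral (ℓ² operator) norm of a matrix. -/
noncomputable def specNorm {p q : Type*} [Fintype p] [Fintype q] [DecidableEq q]
    (M : Matrix p q ℝ) : ℝ :=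
  ‖LinearMap.toContinuousLinearMap (Matrix.toEuclideanLin M)‖

/-- Solution of the indefinite least squares problem: `x = (AᵀJA)⁻¹AᵀJb`. -/
noncomputable def ilsX {m n : ℕ} (A : Matrix (Fin m) (Fin n) ℝ)
    (J : Matrix (Fin m) (Fin m) ℝ) (b : Fin m → ℝ) : Fin n → ℝ :=
  ((Aᵀ * J * A)⁻¹ * Aᵀ * J) *ᵥ b

/-- Residual of the indefinite least squares problem: `r = b - Ax`. -/
noncomputable def ilsR {m n : ℕ} (A : Matrix (Fin m) (Fin n) ℝ)
    (J : Matrix (Fin m) (Fin m) ℝ) (b : Fin m → ℝ) : Fin m → ℝ :=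
  b - A *ᵥ (ilsX A J b)

/-- `M₁ = (AᵀJA)⁻¹ ⊗ (Jr)ᵀ`, realized as an `n × (n·m)` matrix whose column
index `(j, k)` corresponds to entry `(k, j)` of the perturbation matrix. -/
noncomputable def ilsM1 {m n : ℕ} (A : Matrix (Fin m) (Fin n) ℝ)
    (J : Matrix (Fin m) (Fin m) ℝ) (b : Fin m → ℝ) :
    Matrix (Fin n) (Fin n × Fin m) ℝ :=
  Matrix.of fun i jk => (Aᵀ * J * A)⁻¹ i jk.1 * (J *ᵥ (ilsR A J b)) jk.2

/-- `M₂ = xᵀ ⊗ (AᵀJA)⁻¹AᵀJ`, realized as an `n × (n·m)` matrix. -/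
noncomputable def ilsM2 {m n : ℕ} (A : Matrix (Fin m) (Fin n) ℝ)
    (J : Matrix (Fin m) (Fin m) ℝ) (b : Fin m → ℝ) :
    Matrix (Fin n) (Fin n × Fin m) ℝ :=
  Matrix.of fun i jk => (ilsX A J b) jk.1 * ((Aᵀ * J * A)⁻¹ * Aᵀ * J) i jk.2

/-- The 2×1 example matrix `A = (cos θ, sin θ)ᵀ`. -/
noncomputable def exA (θ : ℝ) : Matrix (Fin 2) (Fin 1) ℝ := !![Real.cos θ; Real.sin θ]

/-- The signature matrix `J = diag(1, −1)`. -/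
noncomputable def exJ : Matrix (Fin 2) (Fin 2) ℝ := !![1, 0; 0, -1]

/-- The right-hand side `b = (1, 1)ᵀ`. -/
noncomputable def exb : Fin 2 → ℝ := ![1, 1]

/-- The bound coefficient `ℬ = (‖A‖_F/‖x‖₂)(‖M₁‖₂ + ‖M₂‖₂)` of the 2×1 example,
as a function of `α` (with `θ = π/4 − α`). -/
noncomputable def exB (α : ℝ) : ℝ :=
  (frobNorm (exA (Real.pi / 4 - α)) / eNorm (ilsX (exA (Real.pi / 4 - α)) exJ exb))
    * (specNorm (ilsM1 (exA (Real.pi / 4 - α)) exJ exb)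
        + specNorm (ilsM2 (exA (Real.pi / 4 - α)) exJ exb))

/-- The condition number `χ = (‖A‖_F/‖x‖₂)·‖M₁ − M₂‖₂` of the 2×1 example,
as a function of `α` (with `θ = π/4 − α`). -/
noncomputable def exChi (α : ℝ) : ℝ :=
  (frobNorm (exA (Real.pi / 4 - α)) / eNorm (ilsX (exA (Real.pi / 4 - α)) exJ exb))
    * specNorm (ilsM1 (exA (Real.pi / 4 - α)) exJ exb
        - ilsM2 (exA (Real.pi / 4 - α)) exJ exb)

/-!
For `A = (a, b)ᵀ`, `J = diag(1, -1)` and right-hand side `(1, 1)ᵀ` everything is explicit: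
`AᵀJA = a² - b²`, `x = 1/(a + b)` and `Jr = (b, -a)/(a + b)`. Since `n = 1`, `M₁` and `M₂`
are single rows, `(b, -a)` and `(a, -b)` scaled by `1/((a² - b²)(a + b))`, so their spectral
norms are Euclidean norms and blow up as `a² - b² → 0`; in `M₁ - M₂ = -(1, 1)/(a + b)²` that
factor cancels.
For `a = cos θ`, `b = sin θ`, `θ = π/4 - α` one has `a² + b² = 1`, `a² - b² = sin 2α` and
`a + b = √2 cos α`.
-/

lemma eNorm_eq_norm_toLp {p : Type*} [Fintype p] (v : p → ℝ) :
    eNorm v = ‖WithLp.toLp 2 v‖ := by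
  simp [eNorm, EuclideanSpace.norm_eq]

lemma specNorm_eq_eNorm_of_unique {p q : Type*} [Fintype p] [Unique p] [Fintype q]
    [DecidableEq q] (M : Matrix p q ℝ) : specNorm M = eNorm (M default) := by
  have hM : LinearMap.toContinuousLinearMap (Matrix.toEuclideanLin M)
      = InnerProductSpace.rankOne ℝ (EuclideanSpace.single default 1)
          (WithLp.toLp 2 (M default)) := by
    ext v i
    rw [Unique.eq_default i]
    simp [Matrix.mulVec, dotProduct, PiLp.inner_apply, mul_comm]
  rw [specNorm, hM, InnerProductSpace.norm_rankOne, PiLp.norm_single, norm_one, one_mul,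
    eNorm_eq_norm_toLp]

lemma eNorm_smul {p : Type*} [Fintype p] (c : ℝ) (v : p → ℝ) :
    eNorm (c • v) = |c| * eNorm v := by
  simp only [eNorm_eq_norm_toLp, WithLp.toLp_smul, norm_smul, Real.norm_eq_abs]

lemma eNorm_comp_snd {ι κ : Type*} [Fintype ι] [Unique ι] [Fintype κ] (v : κ → ℝ) :
    eNorm (fun ik : ι × κ => v ik.2) = eNorm v := by
  simp [eNorm, Fintype.sum_prod_type]

lemma eNorm_vec2 (u v : ℝ) : eNorm ![u, v] = √(u ^ 2 + v ^ 2) := by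
  simp [eNorm, Fin.sum_univ_two]

lemma inv_fin_one_of (d : ℝ) : (!![d])⁻¹ = !![d⁻¹] := by
  rw [Matrix.inv_def]
  ext i j
  simp [Subsingleton.elim i j]

lemma add_ne_zero_and_sub_ne_zero_of_sq_ne_sq {R : Type*} [CommRing R] [NoZeroDivisors R]
    {a b : R} (h : a ^ 2 ≠ b ^ 2) : a + b ≠ 0 ∧ a - b ≠ 0 :=
  mul_ne_zero_iff.mp (sq_sub_sq a b ▸ sub_ne_zero.mpr h)

section TwoByOne

variable {a b : ℝ}

lemma gram_twoByOne (a b : ℝ) : (!![a; b])ᵀ * exJ * !![a; b] = !![a ^ 2 - b ^ 2] := by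
  ext i j
  simp [exJ, Matrix.mul_apply, Fin.sum_univ_two, sq, sub_eq_add_neg]

lemma pinv_twoByOne (a b : ℝ) :
    ((!![a; b])ᵀ * exJ * !![a; b])⁻¹ * (!![a; b])ᵀ * exJ
      = !![a / (a ^ 2 - b ^ 2), -b / (a ^ 2 - b ^ 2)] := by
  rw [gram_twoByOne, inv_fin_one_of]
  ext i j
  fin_cases i
  fin_cases j <;>
    simp [exJ, Matrix.mul_apply, Fin.sum_univ_two, Matrix.vecMul, dotProduct, div_eq_inv_mul]

lemma ilsX_twoByOne (h : a ^ 2 ≠ b ^ 2) : ilsX !![a; b] exJ exb = ![(a + b)⁻¹] := by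
  obtain ⟨hadd, hsub⟩ := add_ne_zero_and_sub_ne_zero_of_sq_ne_sq h
  rw [ilsX, pinv_twoByOne]
  ext i
  fin_cases i
  simp only [exb, mulVec, dotProduct, Fin.sum_univ_two, of_apply, cons_val', cons_val_zero,
    cons_val_one, cons_val_fin_one, mul_one]
  field_simp
  ring

lemma exJ_mulVec_ilsR_twoByOne (h : a ^ 2 ≠ b ^ 2) :
    exJ *ᵥ ilsR !![a; b] exJ exb = (a + b)⁻¹ • ![b, -a] := by
  have hadd := (add_ne_zero_and_sub_ne_zero_of_sq_ne_sq h).1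
  rw [ilsR, ilsX_twoByOne h]
  ext i
  fin_cases i <;> simp [exJ, exb, Matrix.mulVec, dotProduct] <;>
    field_simp <;> ring

lemma ilsM1_twoByOne_apply (h : a ^ 2 ≠ b ^ 2) (i : Fin 1) (jk : Fin 1 × Fin 2) :
    ilsM1 !![a; b] exJ exb i jk = ((a ^ 2 - b ^ 2) * (a + b))⁻¹ * ![b, -a] jk.2 := by
  simp only [ilsM1, Matrix.of_apply, gram_twoByOne, inv_fin_one_of, exJ_mulVec_ilsR_twoByOne h]
  simp only [Subsingleton.elim i 0, Subsingleton.elim jk.1 0, cons_val', cons_val_fin_one,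
    Pi.smul_apply, smul_eq_mul, _root_.mul_inv]
  ring

lemma ilsM2_twoByOne_apply (h : a ^ 2 ≠ b ^ 2) (i : Fin 1) (jk : Fin 1 × Fin 2) :
    ilsM2 !![a; b] exJ exb i jk = ((a ^ 2 - b ^ 2) * (a + b))⁻¹ * ![a, -b] jk.2 := by
  simp only [ilsM2, Matrix.of_apply, ilsX_twoByOne h, pinv_twoByOne]
  obtain ⟨j, k⟩ := jk
  fin_cases i; fin_cases j; fin_cases k <;> simp <;> ring

lemma specNorm_ilsM1_twoByOne (h : a ^ 2 ≠ b ^ 2) :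
    specNorm (ilsM1 !![a; b] exJ exb) = √(a ^ 2 + b ^ 2) / |(a ^ 2 - b ^ 2) * (a + b)| := by
  have hrow : ilsM1 !![a; b] exJ exb default
      = fun jk => (((a ^ 2 - b ^ 2) * (a + b))⁻¹ • ![b, -a]) jk.2 := by
    ext jk
    simp [ilsM1_twoByOne_apply h]
  rw [specNorm_eq_eNorm_of_unique, hrow, eNorm_comp_snd, eNorm_smul, eNorm_vec2,
    abs_inv, neg_sq, add_comm (b ^ 2), div_eq_inv_mul]

lemma specNorm_ilsM2_twoByOne (h : a ^ 2 ≠ b ^ 2) :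
    specNorm (ilsM2 !![a; b] exJ exb) = √(a ^ 2 + b ^ 2) / |(a ^ 2 - b ^ 2) * (a + b)| := by
  have hrow : ilsM2 !![a; b] exJ exb default
      = fun jk => (((a ^ 2 - b ^ 2) * (a + b))⁻¹ • ![a, -b]) jk.2 := by
    ext jk
    simp [ilsM2_twoByOne_apply h]
  rw [specNorm_eq_eNorm_of_unique, hrow, eNorm_comp_snd, eNorm_smul, eNorm_vec2,
    abs_inv, neg_sq, div_eq_inv_mul]

lemma specNorm_ilsM1_sub_ilsM2_twoByOne (h : a ^ 2 ≠ b ^ 2) :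
    specNorm (ilsM1 !![a; b] exJ exb - ilsM2 !![a; b] exJ exb) = √2 / (a + b) ^ 2 := by
  have hadd := (add_ne_zero_and_sub_ne_zero_of_sq_ne_sq h).1
  have hrow : (ilsM1 !![a; b] exJ exb - ilsM2 !![a; b] exJ exb) default
      = fun jk => (((a + b) ^ 2)⁻¹ • ![-1, -1]) jk.2 := by
    ext ⟨j, k⟩
    rw [Matrix.sub_apply, ilsM1_twoByOne_apply h, ilsM2_twoByOne_apply h]
    fin_cases k <;> simp <;> field_simp <;> ring
  rw [specNorm_eq_eNorm_of_unique, hrow, eNorm_comp_snd, eNorm_smul, eNorm_vec2,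
    abs_inv, abs_sq]
  norm_num [div_eq_inv_mul]

lemma frobNorm_twoByOne (a b : ℝ) : frobNorm !![a; b] = √(a ^ 2 + b ^ 2) := by
  simp [frobNorm, Fin.sum_univ_two]

lemma eNorm_ilsX_twoByOne (h : a ^ 2 ≠ b ^ 2) : eNorm (ilsX !![a; b] exJ exb) = |a + b|⁻¹ := by
  simp [ilsX_twoByOne h, eNorm, Real.sqrt_sq_eq_abs]

end TwoByOne

open Real Filter Topology

lemma cos_add_sin_pi_div_four_sub (α : ℝ) :
    cos (π / 4 - α) + sin (π / 4 - α) = √2 * cos α := by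
  rw [cos_sub, sin_sub, cos_pi_div_four, sin_pi_div_four]
  ring

lemma cos_sq_sub_sin_sq_pi_div_four_sub (α : ℝ) :
    cos (π / 4 - α) ^ 2 - sin (π / 4 - α) ^ 2 = sin (2 * α) := by
  rw [← cos_two_mul', show 2 * (π / 4 - α) = π / 2 - 2 * α by ring, cos_pi_div_two_sub]

lemma tendsto_sin_nhdsGT_zero : Tendsto sin (𝓝[>] 0) (𝓝[>] 0) := by
  apply tendsto_nhdsWithin_of_tendsto_nhds_of_eventually_within
  · simpa using continuous_sin.continuousWithinAt.tendsto (s := Set.Ioi 0) (x := 0)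
  · filter_upwards [Ioo_mem_nhdsGT pi_pos] with x hx
    exact sin_pos_of_mem_Ioo hx

section Example

variable {α : ℝ}

lemma sin_two_mul_pos_of_lt_pi_div_four (hα : 0 < α) (hα' : α < π / 4) : 0 < sin (2 * α) :=
  sin_pos_of_pos_of_lt_pi (by linarith) (by linarith)

lemma cos_pos_of_lt_pi_div_four (hα : 0 < α) (hα' : α < π / 4) : 0 < cos α :=
  cos_pos_of_mem_Ioo ⟨by linarith, by linarith⟩

lemma sq_cos_ne_sq_sin_pi_div_four_sub (hα : 0 < α) (hα' : α < π / 4) :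
    cos (π / 4 - α) ^ 2 ≠ sin (π / 4 - α) ^ 2 := by
  rw [← sub_ne_zero, cos_sq_sub_sin_sq_pi_div_four_sub]
  exact (sin_two_mul_pos_of_lt_pi_div_four hα hα').ne'

lemma specNorm_ilsM1_exA (hα : 0 < α) (hα' : α < π / 4) :
    specNorm (ilsM1 (exA (π / 4 - α)) exJ exb)
      = (√2)⁻¹ * (sin (2 * α))⁻¹ * (cos α)⁻¹ := by
  have hs := sin_two_mul_pos_of_lt_pi_div_four hα hα'
  have hc := cos_pos_of_lt_pi_div_four hα hα'
  rw [exA, specNorm_ilsM1_twoByOne (sq_cos_ne_sq_sin_pi_div_four_sub hα hα'), cos_sq_add_sin_sq,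
    sqrt_one, cos_sq_sub_sin_sq_pi_div_four_sub, cos_add_sin_pi_div_four_sub,
    abs_of_pos (by positivity)]
  field_simp

lemma specNorm_ilsM2_exA (hα : 0 < α) (hα' : α < π / 4) :
    specNorm (ilsM2 (exA (π / 4 - α)) exJ exb)
      = (√2)⁻¹ * (sin (2 * α))⁻¹ * (cos α)⁻¹ := by
  rw [exA, specNorm_ilsM2_twoByOne (sq_cos_ne_sq_sin_pi_div_four_sub hα hα'),
    ← specNorm_ilsM1_twoByOne (sq_cos_ne_sq_sin_pi_div_four_sub hα hα'), ← exA,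
    specNorm_ilsM1_exA hα hα']

lemma specNorm_ilsM1_sub_ilsM2_exA (hα : 0 < α) (hα' : α < π / 4) :
    specNorm (ilsM1 (exA (π / 4 - α)) exJ exb - ilsM2 (exA (π / 4 - α)) exJ exb)
      = (√2 * cos α ^ 2)⁻¹ := by
  rw [exA, specNorm_ilsM1_sub_ilsM2_twoByOne (sq_cos_ne_sq_sin_pi_div_four_sub hα hα'),
    cos_add_sin_pi_div_four_sub]
  have hc := cos_pos_of_lt_pi_div_four hα hα'
  field_simp

lemma frobNorm_exA (θ : ℝ) : frobNorm (exA θ) = 1 := by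
  rw [exA, frobNorm_twoByOne, cos_sq_add_sin_sq, sqrt_one]

lemma eNorm_ilsX_exA (hα : 0 < α) (hα' : α < π / 4) :
    eNorm (ilsX (exA (π / 4 - α)) exJ exb) = (√2 * cos α)⁻¹ := by
  have hc := cos_pos_of_lt_pi_div_four hα hα'
  rw [exA, eNorm_ilsX_twoByOne (sq_cos_ne_sq_sin_pi_div_four_sub hα hα'),
    cos_add_sin_pi_div_four_sub, abs_of_pos (by positivity)]

lemma exB_eq (hα : 0 < α) (hα' : α < π / 4) : exB α = 2 * (sin (2 * α))⁻¹ := by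
  have hc := cos_pos_of_lt_pi_div_four hα hα'
  rw [exB, frobNorm_exA, eNorm_ilsX_exA hα hα', specNorm_ilsM1_exA hα hα',
    specNorm_ilsM2_exA hα hα']
  field_simp
  ring

lemma exChi_eq (hα : 0 < α) (hα' : α < π / 4) : exChi α = (cos α)⁻¹ := by
  have hc := cos_pos_of_lt_pi_div_four hα hα'
  rw [exChi, frobNorm_exA, eNorm_ilsX_exA hα hα', specNorm_ilsM1_sub_ilsM2_exA hα hα']
  field_simp

lemma exB_div_exChi (hα : 0 < α) (hα' : α < π / 4) : exB α / exChi α = (sin α)⁻¹ := by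
  have hc := cos_pos_of_lt_pi_div_four hα hα'
  have hs : 0 < sin α := sin_pos_of_pos_of_lt_pi hα (by linarith [pi_pos])
  rw [exB_eq hα hα', exChi_eq hα hα', sin_two_mul]
  field_simp

end Example

open Filter Topology in
/-- First example of the paper, continued: `‖M₁‖₂ = ‖M₂‖₂ = 2^{-1/2} csc(2α) sec(α)`,
`ℬ = 2 csc(2α)`, `χ = sec α`, `ℬ/χ = 1/sin α`, and `ℬ/χ → ∞` as `α → 0⁺`. -/
theorem stmt_14 :
    (∀ α : ℝ, 0 < α → α < Real.pi / 4 →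
      specNorm (ilsM1 (exA (Real.pi / 4 - α)) exJ exb)
        = (Real.sqrt 2)⁻¹ * (Real.sin (2 * α))⁻¹ * (Real.cos α)⁻¹ ∧
      specNorm (ilsM2 (exA (Real.pi / 4 - α)) exJ exb)
        = (Real.sqrt 2)⁻¹ * (Real.sin (2 * α))⁻¹ * (Real.cos α)⁻¹ ∧
      exB α = 2 * (Real.sin (2 * α))⁻¹ ∧
      exChi α = (Real.cos α)⁻¹ ∧
      exB α / exChi α = (Real.sin α)⁻¹) ∧
    Tendsto (fun α : ℝ => exB α / exChi α) (𝓝[>] 0) atTop := by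
  refine ⟨fun α hα hα' => ⟨specNorm_ilsM1_exA hα hα', specNorm_ilsM2_exA hα hα',
    exB_eq hα hα', exChi_eq hα hα', exB_div_exChi hα hα'⟩, ?_⟩
  refine tendsto_sin_nhdsGT_zero.inv_tendsto_nhdsGT_zero.congr' ?_
  filter_upwards [Ioo_mem_nhdsGT (div_pos Real.pi_pos four_pos)] with α hα
  exact (exB_div_exChi hα.1 hα.2).symm
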